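/- Let n ≥ 1 and μ1 ∈ ℝ with n+μ1 > 1, let δ ≥ 0, and set κ := (μ1−1−√δ)/2. If n − d_*(n+μ1) < √δ < n, then p_F(n+κ) < 2/(n−√δ). -/

import Mathlib

/-- Fujita exponent `p_F(ν) = 1 + 2/ν` (as a real number; meaningful for `ν > 0`). -/
noncomputable def pF (ν : ℝ) : ℝ := 1 + 2 / ν

/-- `d_*(ν)`: zero for `ν ≤ 1`, and `(−1−ν+√(ν²+10ν−7))/2` for `ν > 1`. -/
noncomputable def dStar (ν : ℝ) : ℝ :=
  if 1 < ν then (-1 - ν + Real.sqrt (ν ^ 2 + 10 * ν - 7)) / 2 else 0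

/-! For `ν > 1`, `d_*(ν)` is the positive root of `x² + (ν+1)x − 2(ν−1)`, and with `a := n − √δ`,
`ν := n + μ1` one has `n + κ = (ν − 1 + a)/2`. Clearing denominators, `p_F(n+κ) < 2/a` says
exactly that this quadratic is negative at `a`, which holds because `0 < a < d_*(ν)`. -/

lemma dStar_of_one_lt {ν : ℝ} (hν : 1 < ν) :
    dStar ν = (-1 - ν + Real.sqrt (ν ^ 2 + 10 * ν - 7)) / 2 :=
  if_pos hν

lemma sq_add_mul_lt_of_lt_dStar {ν a : ℝ} (hν : 1 < ν) (ha : 0 ≤ a) (had : a < dStar ν) :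
    a ^ 2 + (ν + 1) * a < 2 * (ν - 1) := by
  rw [dStar_of_one_lt hν] at had
  have hsq : (2 * a + ν + 1) ^ 2 < ν ^ 2 + 10 * ν - 7 :=
    (Real.lt_sqrt (by linarith)).mp (by linarith)
  linear_combination hsq / 4

lemma pF_half_lt_two_div_iff {a b : ℝ} (ha : 0 < a) (hb : 0 < b) :
    pF (b / 2) < 2 / a ↔ a * b + 4 * a < 2 * b := by
  have hpF : pF (b / 2) = (b + 4) / b := by
    rw [pF]
    field_simp
    ring
  rw [hpF, div_lt_div_iff₀ hb ha]
  constructor <;> intro h <;> linarith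

theorem pF_lt_transition_general (n μ1 δ : ℝ) (hnμ : 1 < n + μ1)
    (h1 : n - dStar (n + μ1) < Real.sqrt δ) (h2 : Real.sqrt δ < n) :
    pF (n + (μ1 - 1 - Real.sqrt δ) / 2) < 2 / (n - Real.sqrt δ) := by
  set a := n - Real.sqrt δ
  have ha : 0 < a := sub_pos.mpr h2
  have hquad := sq_add_mul_lt_of_lt_dStar hnμ ha.le (by linarith)
  have harg : n + (μ1 - 1 - Real.sqrt δ) / 2 = (n + μ1 - 1 + a) / 2 := by ring
  rw [harg, pF_half_lt_two_div_iff ha (by linarith)]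
  linear_combination hquad

/-- If `n − d_*(n+μ1) < √δ < n` (with `n+μ1 > 1`), then `p_F(n+κ) < 2/(n−√δ)`. -/
theorem pF_lt_transition (n μ1 δ : ℝ) (hn : 1 ≤ n) (hnμ : 1 < n + μ1)
    (hδ : 0 ≤ δ) (h1 : n - dStar (n + μ1) < Real.sqrt δ) (h2 : Real.sqrt δ < n) :
    pF (n + (μ1 - 1 - Real.sqrt δ) / 2) < 2 / (n - Real.sqrt δ) :=
  pF_lt_transition_general n μ1 δ hnμ h1 h2
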